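/- arXiv:1912.06651 — 4 statements merged into one kernel-verified Lean document; each statement's English description precedes it below -/
import Mathlib

section
/- For 0 ≤ r < k and n ≥ 1, x^r · det((C(i-k+1+r, j)·x^k + C(i+1+r, j+1))_{i,j=0}^{n-1}) = F^{(k)}_{kn+r}(x). -/
/-- Generalized binomial coefficient `C(a,b)` for integer `a`, with `C(a,b) = 0` for `b < 0`. -/
noncomputable def gchoose (a b : ℤ) : ℤ :=
  if 0 ≤ b then Ring.choose a b.toNat else 0

lemma gchoose_neg {a b : ℤ} (hb : b < 0) : gchoose a b = 0 := by
  simp [gchoose, not_le.mpr hb]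

lemma gchoose_natCast (a : ℤ) (n : ℕ) : gchoose a (n : ℤ) = Ring.choose a n := by
  simp [gchoose]

lemma gchoose_zero_right (a : ℤ) : gchoose a 0 = 1 := by
  simp [gchoose, Ring.choose_zero_right]

lemma gchoose_nat_nat (n m : ℕ) : gchoose (n : ℤ) (m : ℤ) = Nat.choose n m := by
  rw [gchoose_natCast, Ring.choose_natCast]

lemma gchoose_nat_lt {n : ℕ} {b : ℤ} (h : (n : ℤ) < b) : gchoose (n : ℤ) b = 0 := by
  rcases le_or_gt 0 b with hb | hb
  · lift b to ℕ using hb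
    rw [gchoose_nat_nat, Nat.choose_eq_zero_of_lt (by exact_mod_cast h)]
    simp
  · exact gchoose_neg hb

lemma gchoose_zero_left (b : ℤ) : gchoose 0 b = if b = 0 then 1 else 0 := by
  split
  · subst ‹b = 0›; exact gchoose_zero_right 0
  · rcases lt_or_gt_of_ne ‹b ≠ 0› with hb | hb
    · exact gchoose_neg hb
    · exact gchoose_nat_lt (by exact_mod_cast hb)

lemma gchoose_pascal (a b : ℤ) :
    gchoose (a + 1) (b + 1) = gchoose a b + gchoose a (b + 1) := by
  rcases le_or_gt 0 b with hb | hb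
  · lift b to ℕ using hb
    rw [show (b : ℤ) + 1 = ((b + 1 : ℕ) : ℤ) by push_cast; ring, gchoose_natCast,
      gchoose_natCast, gchoose_natCast, Ring.choose_succ_succ]
  · rcases eq_or_lt_of_le (by omega : b + 1 ≤ 0) with hb1 | hb1
    · rw [hb1, gchoose_zero_right, gchoose_zero_right, gchoose_neg hb, zero_add]
    · rw [gchoose_neg hb, gchoose_neg (by omega), gchoose_neg (by omega), add_zero]

/-- Vandermonde for `gchoose` with natural `m`. -/
lemma gchoose_vandermonde (b c : ℤ) (m : ℕ) :
    ∑ d ∈ Finset.range (m + 1), gchoose b (d : ℤ) * gchoose c ((m : ℤ) - (d : ℤ)) =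
      gchoose (b + c) (m : ℤ) := by
  rw [gchoose_natCast, Ring.add_choose_eq m (Commute.all b c),
    Finset.Nat.sum_antidiagonal_eq_sum_range_succ_mk]
  refine Finset.sum_congr rfl fun d hd => ?_
  have hdm : d ≤ m := by simpa using Nat.lt_succ_iff.mp (Finset.mem_range.mp hd)
  rw [gchoose_natCast, show (m : ℤ) - (d : ℤ) = ((m - d : ℕ) : ℤ) by omega, gchoose_natCast]

/-- Truncated Vandermonde. -/
lemma gchoose_tv (b c : ℤ) (p : ℕ) (j : ℤ) (N : ℕ)
    (h : ∀ a : ℕ, N ≤ a → gchoose b ((a : ℤ) - p) * gchoose c (j - a) = 0) :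
    ∑ a ∈ Finset.range N, gchoose b ((a : ℤ) - p) * gchoose c (j - (a : ℤ)) =
      gchoose (b + c) (j - p) := by
  rcases lt_or_ge j (p : ℤ) with hj | hj
  · rw [gchoose_neg (by omega)]
    refine Finset.sum_eq_zero fun a _ => ?_
    rcases lt_or_ge (a : ℤ) (p : ℤ) with ha | ha
    · rw [gchoose_neg (by omega), zero_mul]
    · rw [gchoose_neg (show j - (a:ℤ) < 0 by omega), mul_zero]
  · obtain ⟨m, hm⟩ : ∃ m : ℕ, j = (p : ℤ) + m := ⟨(j - p).toNat, by omega⟩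
    subst hm
    set f : ℕ → ℤ := fun a => gchoose b ((a : ℤ) - p) * gchoose c ((p : ℤ) + m - (a : ℤ)) with hf
    have key : ∀ M : ℕ, p + m + 1 ≤ M → ∑ a ∈ Finset.range M, f a = gchoose (b + c) m := by
      intro M hM
      have h1 : ∑ a ∈ Finset.range M, f a = ∑ a ∈ Finset.range (p + m + 1), f a := by
        refine (Finset.sum_subset (Finset.range_subset_range.mpr hM) fun a _ ha => ?_).symm
        have : p + m + 1 ≤ a := by simpa using ha
        rw [hf]; simp only
        rw [gchoose_neg (show (p:ℤ) + m - a < 0 by omega), mul_zero]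
      rw [h1]
      have h2 : ∑ a ∈ Finset.range (p + m + 1), f a
          = ∑ d ∈ Finset.range (m + 1), f (p + d) := by
        rw [show p + m + 1 = p + (m + 1) by ring, Finset.sum_range_add]
        have : ∀ a ∈ Finset.range p, f a = 0 := fun a ha => by
          rw [hf]; simp only
          rw [gchoose_neg (show (a:ℤ) - p < 0 by
            have := Finset.mem_range.mp ha; omega), zero_mul]
        rw [Finset.sum_eq_zero this, zero_add]
      rw [h2]
      have h3 : ∀ d ∈ Finset.range (m + 1),
          f (p + d) = gchoose b d * gchoose c ((m : ℤ) - d) := by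
        intro d _
        rw [hf]; simp only
        congr 2 <;> push_cast <;> ring
      rw [Finset.sum_congr rfl h3, gchoose_vandermonde]
    rcases le_or_gt (p + m + 1) N with hN | hN
    · rw [key N hN]; congr 1; omega
    · have h4 : ∑ a ∈ Finset.range (p + m + 1), f a
          = ∑ a ∈ Finset.range N, f a := by
        refine (Finset.sum_subset (Finset.range_subset_range.mpr (by omega)) fun a _ ha => ?_).symm
        exact h (a) (by simpa using ha)
      rw [← h4]
      rw [key (p + m + 1) le_rfl]
      congr 1
      omega

/-- Truncated Vandermonde, shifted variant (offset `-1`). -/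
lemma gchoose_tv' (b c : ℤ) (j : ℤ) (N : ℕ)
    (h : ∀ a : ℕ, N ≤ a → gchoose b ((a : ℤ) + 1) * gchoose c (j - a) = 0) :
    ∑ a ∈ Finset.range N, gchoose b ((a : ℤ) + 1) * gchoose c (j - (a : ℤ)) =
      gchoose (b + c) (j + 1) - gchoose c (j + 1) := by
  have := gchoose_tv b c 0 (j + 1) (N + 1) (fun a ha => by
    rcases Nat.eq_zero_or_pos a with rfl | hpos
    · exact absurd ha (by omega)
    · obtain ⟨a', rfl⟩ := Nat.exists_eq_succ_of_ne_zero hpos.ne'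
      have := h a' (by omega)
      rw [show (↑(a' + 1) : ℤ) - (0:ℕ) = (a' : ℤ) + 1 by push_cast; ring,
        show j + 1 - (↑(a' + 1) : ℤ) = j - a' by push_cast; ring]
      exact this)
  rw [Finset.sum_range_succ'] at this
  simp only [Nat.cast_zero, sub_zero, Nat.cast_ofNat] at this
  rw [gchoose_zero_right, one_mul] at this
  have h2 : ∀ a ∈ Finset.range N,
      gchoose b ((a + 1 : ℕ) : ℤ) * gchoose c (j + 1 - ((a + 1 : ℕ) : ℤ))
        = gchoose b ((a:ℤ) + 1) * gchoose c (j - a) := by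
    intro a _
    congr 2 <;> push_cast <;> ring
  rw [Finset.sum_congr rfl h2] at this
  omega

/-- Generalized Fibonacci polynomials
`F^{(k)}_m(x) = ∑_{j=0}^{⌊m/k⌋} C(m-(k-1)j, j) x^{m-kj}`. -/
noncomputable def genFib (k m : ℕ) (x : ℝ) : ℝ :=
  ∑ j ∈ Finset.range (m / k + 1),
    (Nat.choose (m - (k - 1) * j) j : ℝ) * x ^ (m - k * j)

noncomputable section

/-- Entry function of the Toeplitz form. -/
def Ee (k : ℕ) (x : ℝ) (m j : ℤ) : ℝ :=
  (gchoose (m - k + 1) j : ℝ) * x ^ k + (gchoose (m + 1) (j + 1) : ℝ)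

/-- Toeplitz matrix `T(r)` of size `n`. -/
def Tm (k : ℕ) (x : ℝ) (r : ℤ) (n : ℕ) : Matrix (Fin n) (Fin n) ℝ :=
  Matrix.of fun i j => Ee k x r ((j : ℤ) - (i : ℤ))

variable {k n : ℕ} {x : ℝ} {r c : ℤ}

lemma prod_entry (k n : ℕ) (x : ℝ) (r c : ℤ) (i j : Fin (n + 1)) :
    (Tm k x r (n + 1) *
        Matrix.of (fun a b : Fin (n + 1) => ((gchoose c ((b : ℤ) - (a : ℤ)) : ℤ) : ℝ))) i j =
      x ^ k * (gchoose (r - k + 1 + c) ((j : ℤ) - (i : ℤ)) : ℝ) +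
        (if (i : ℕ) = 0 then
            ((gchoose (r + 1 + c) ((j : ℤ) + 1) : ℤ) : ℝ) - ((gchoose c ((j : ℤ) + 1) : ℤ) : ℝ)
          else ((gchoose (r + 1 + c) ((j : ℤ) - (i : ℤ) + 1) : ℤ) : ℝ)) := by
  have step1 : (Tm k x r (n + 1) *
        Matrix.of (fun a b : Fin (n + 1) => ((gchoose c ((b : ℤ) - (a : ℤ)) : ℤ) : ℝ))) i j =
      x ^ k * ((∑ a ∈ Finset.range (n + 1),
          gchoose (r - k + 1) ((a : ℤ) - (i : ℤ)) * gchoose c ((j : ℤ) - (a : ℤ)) : ℤ) : ℝ) +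
        ((∑ a ∈ Finset.range (n + 1),
          gchoose (r + 1) ((a : ℤ) - (i : ℤ) + 1) * gchoose c ((j : ℤ) - (a : ℤ)) : ℤ) : ℝ) := by
    rw [Matrix.mul_apply]
    rw [show (∑ a ∈ Finset.range (n + 1),
          gchoose (r - k + 1) ((a : ℤ) - (i : ℤ)) * gchoose c ((j : ℤ) - (a : ℤ)) : ℤ)
        = ∑ a : Fin (n + 1),
          gchoose (r - k + 1) ((a : ℤ) - (i : ℤ)) * gchoose c ((j : ℤ) - (a : ℤ)) from
      (Fin.sum_univ_eq_sum_range _ _).symm]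
    rw [show (∑ a ∈ Finset.range (n + 1),
          gchoose (r + 1) ((a : ℤ) - (i : ℤ) + 1) * gchoose c ((j : ℤ) - (a : ℤ)) : ℤ)
        = ∑ a : Fin (n + 1),
          gchoose (r + 1) ((a : ℤ) - (i : ℤ) + 1) * gchoose c ((j : ℤ) - (a : ℤ)) from
      (Fin.sum_univ_eq_sum_range _ _).symm]
    push_cast
    rw [Finset.mul_sum, ← Finset.sum_add_distrib]
    refine Finset.sum_congr rfl fun a _ => ?_
    simp only [Tm, Ee, Matrix.of_apply]
    push_cast
    ring
  rw [step1]
  have tail : ∀ (b : ℤ) (a : ℕ), n + 1 ≤ a →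
      gchoose b ((a : ℤ) - (i : ℕ)) * gchoose c ((j : ℤ) - a) = 0 := fun b a ha => by
    rw [gchoose_neg (show (j : ℤ) - a < 0 by have := j.isLt; omega), mul_zero]
  have h1 : (∑ a ∈ Finset.range (n + 1),
      gchoose (r - k + 1) ((a : ℤ) - (i : ℤ)) * gchoose c ((j : ℤ) - (a : ℤ)) : ℤ)
      = gchoose (r - k + 1 + c) ((j : ℤ) - (i : ℤ)) := by
    have := gchoose_tv (r - k + 1) c (i : ℕ) (j : ℤ) (n + 1) (tail _)
    simpa using this
  rw [h1]
  congr 1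
  by_cases hi : (i : ℕ) = 0
  · rw [if_pos hi]
    have hi' : (i : ℤ) = 0 := by exact_mod_cast hi
    have h2 : (∑ a ∈ Finset.range (n + 1),
        gchoose (r + 1) ((a : ℤ) - (i : ℤ) + 1) * gchoose c ((j : ℤ) - (a : ℤ)) : ℤ)
        = gchoose (r + 1 + c) ((j : ℤ) + 1) - gchoose c ((j : ℤ) + 1) := by
      rw [Finset.sum_congr rfl (fun a _ => by rw [hi', sub_zero])]
      exact gchoose_tv' (r + 1) c (j : ℤ) (n + 1) (fun a ha => by
        rw [gchoose_neg (show (j : ℤ) - a < 0 by have := j.isLt; omega), mul_zero])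
    rw [h2]
    push_cast
    ring
  · rw [if_neg hi]
    have hp : (((i : ℕ) - 1 : ℕ) : ℤ) = (i : ℤ) - 1 := by
      have : 1 ≤ (i : ℕ) := by omega
      push_cast [this]
      ring
    have h2 : (∑ a ∈ Finset.range (n + 1),
        gchoose (r + 1) ((a : ℤ) - (i : ℤ) + 1) * gchoose c ((j : ℤ) - (a : ℤ)) : ℤ)
        = gchoose (r + 1 + c) ((j : ℤ) - (((i : ℕ) - 1 : ℕ) : ℤ)) := by
      rw [Finset.sum_congr rfl (fun a _ => by rw [show (a : ℤ) - (i : ℤ) + 1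
        = (a : ℤ) - (((i : ℕ) - 1 : ℕ) : ℤ) by rw [hp]; ring])]
      exact gchoose_tv (r + 1) c ((i : ℕ) - 1) (j : ℤ) (n + 1) (fun a ha => by
        rw [gchoose_neg (show (j : ℤ) - a < 0 by have := j.isLt; omega), mul_zero])
    rw [h2, hp, show ((j : ℤ) - ((i : ℤ) - 1)) = (j : ℤ) - (i : ℤ) + 1 from by ring]

lemma Lprod_entry (k n : ℕ) (x : ℝ) (r : ℤ) (i j : Fin n) :
    ((Matrix.of fun a b : Fin n => ((gchoose (a : ℤ) (b : ℤ) : ℤ) : ℝ)) * Tm k x r n) i j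
      = (gchoose ((i : ℤ) - k + 1 + r) (j : ℤ) : ℝ) * x ^ k
        + (gchoose ((i : ℤ) + 1 + r) ((j : ℤ) + 1) : ℝ) := by
  have step1 : ((Matrix.of fun a b : Fin n => ((gchoose (a : ℤ) (b : ℤ) : ℤ) : ℝ)) *
        Tm k x r n) i j =
      x ^ k * ((∑ a ∈ Finset.range n,
          gchoose (i : ℤ) ((a : ℤ) - ((0 : ℕ) : ℤ)) * gchoose (r - k + 1) ((j : ℤ) - (a : ℤ)) : ℤ) : ℝ) +
        ((∑ a ∈ Finset.range n,
          gchoose (i : ℤ) ((a : ℤ) - ((0 : ℕ) : ℤ)) * gchoose (r + 1) ((j : ℤ) + 1 - (a : ℤ)) : ℤ) : ℝ) := by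
    rw [Matrix.mul_apply]
    rw [show (∑ a ∈ Finset.range n,
          gchoose (i : ℤ) ((a : ℤ) - ((0 : ℕ) : ℤ)) * gchoose (r - k + 1) ((j : ℤ) - (a : ℤ)) : ℤ)
        = ∑ a : Fin n,
          gchoose (i : ℤ) ((a : ℤ) - ((0 : ℕ) : ℤ)) * gchoose (r - k + 1) ((j : ℤ) - (a : ℤ)) from
      (Fin.sum_univ_eq_sum_range _ _).symm]
    rw [show (∑ a ∈ Finset.range n,
          gchoose (i : ℤ) ((a : ℤ) - ((0 : ℕ) : ℤ)) * gchoose (r + 1) ((j : ℤ) + 1 - (a : ℤ)) : ℤ)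
        = ∑ a : Fin n,
          gchoose (i : ℤ) ((a : ℤ) - ((0 : ℕ) : ℤ)) * gchoose (r + 1) ((j : ℤ) + 1 - (a : ℤ)) from
      (Fin.sum_univ_eq_sum_range _ _).symm]
    push_cast
    rw [Finset.mul_sum, ← Finset.sum_add_distrib]
    refine Finset.sum_congr rfl fun a _ => ?_
    simp only [Tm, Ee, Matrix.of_apply]
    push_cast
    rw [show (j : ℤ) - (a : ℤ) + 1 = (j : ℤ) + 1 - (a : ℤ) from by ring]
    ring
  rw [step1]
  have tail1 : ∀ a : ℕ, n ≤ a →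
      gchoose (i : ℤ) ((a : ℤ) - ((0 : ℕ) : ℤ)) * gchoose (r - k + 1) ((j : ℤ) - a) = 0 :=
    fun a ha => by
      rw [show ((a : ℤ) - ((0 : ℕ) : ℤ)) = ((a : ℕ) : ℤ) from by push_cast; ring,
        gchoose_nat_lt (show ((i : ℕ) : ℤ) < (a : ℤ) by have := i.isLt; omega), zero_mul]
  have tail2 : ∀ a : ℕ, n ≤ a →
      gchoose (i : ℤ) ((a : ℤ) - ((0 : ℕ) : ℤ)) * gchoose (r + 1) ((j : ℤ) + 1 - a) = 0 :=
    fun a ha => by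
      rw [show ((a : ℤ) - ((0 : ℕ) : ℤ)) = ((a : ℕ) : ℤ) from by push_cast; ring,
        gchoose_nat_lt (show ((i : ℕ) : ℤ) < (a : ℤ) by have := i.isLt; omega), zero_mul]
  have h1 := gchoose_tv (i : ℤ) (r - k + 1) 0 (j : ℤ) n tail1
  have h2 := gchoose_tv (i : ℤ) (r + 1) 0 ((j : ℤ) + 1) n tail2
  rw [h1, h2]
  rw [show ((i : ℤ) + (r - k + 1)) = (i : ℤ) - k + 1 + r from by ring,
    show ((i : ℤ) + (r + 1)) = (i : ℤ) + 1 + r from by ring,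
    show ((j : ℤ) - ((0 : ℕ) : ℤ)) = (j : ℤ) from by push_cast; ring,
    show ((j : ℤ) + 1 - ((0 : ℕ) : ℤ)) = (j : ℤ) + 1 from by push_cast; ring]
  ring

lemma detW (n : ℕ) (c : ℤ) :
    (Matrix.of fun a b : Fin n => ((gchoose c ((b : ℤ) - (a : ℤ)) : ℤ) : ℝ)).det = 1 := by
  rw [Matrix.det_of_upperTriangular (M := Matrix.of fun a b : Fin n =>
      ((gchoose c ((b : ℤ) - (a : ℤ)) : ℤ) : ℝ))
    (fun i j hij => by
      simp only [Matrix.of_apply]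
      rw [gchoose_neg (show (j : ℤ) - (i : ℤ) < 0 by
        have : (j : ℕ) < (i : ℕ) := hij
        omega)]
      simp)]
  refine Finset.prod_eq_one fun i _ => by
    simp only [Matrix.of_apply, sub_self, gchoose_zero_right]
    norm_num

lemma detL (n : ℕ) :
    (Matrix.of fun a b : Fin n => ((gchoose (a : ℤ) (b : ℤ) : ℤ) : ℝ)).det = 1 := by
  rw [Matrix.det_of_lowerTriangular (Matrix.of fun a b : Fin n =>
      ((gchoose (a : ℤ) (b : ℤ) : ℤ) : ℝ))
    (fun i j hij => by
      simp only [Matrix.of_apply]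
      rw [gchoose_nat_lt (show ((i : ℕ) : ℤ) < ((j : ℕ) : ℤ) by
        have : (i : ℕ) < (j : ℕ) := hij
        omega)]
      simp)]
  refine Finset.prod_eq_one fun i _ => by
    simp only [Matrix.of_apply, gchoose_nat_nat, Nat.choose_self]
    norm_num

lemma detA_eq_detT (k : ℕ) (r : ℤ) (n : ℕ) (x : ℝ) :
    (Matrix.of fun i j : Fin n =>
      (gchoose ((i : ℤ) - k + 1 + r) (j : ℤ) : ℝ) * x ^ k
        + (gchoose ((i : ℤ) + 1 + r) ((j : ℤ) + 1) : ℝ)).det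
    = (Tm k x r n).det := by
  have : (Matrix.of fun i j : Fin n =>
      (gchoose ((i : ℤ) - k + 1 + r) (j : ℤ) : ℝ) * x ^ k
        + (gchoose ((i : ℤ) + 1 + r) ((j : ℤ) + 1) : ℝ))
      = (Matrix.of fun a b : Fin n => ((gchoose (a : ℤ) (b : ℤ) : ℤ) : ℝ)) * Tm k x r n := by
    ext i j
    rw [Lprod_entry]
    rfl
  rw [this, Matrix.det_mul, detL, one_mul]

lemma gchoose_one_big {b : ℤ} (h : 1 < b) : gchoose 1 b = 0 := by
  have : ((1 : ℕ) : ℤ) = (1 : ℤ) := by norm_num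
  rw [← this]
  exact gchoose_nat_lt (by omega)

lemma gchoose_one_one : gchoose 1 1 = 1 := by
  have := gchoose_nat_nat 1 1
  norm_num at this
  exact this

lemma Ee_apply (k : ℕ) (x : ℝ) (m j : ℤ) :
    Ee k x m j = (gchoose (m - k + 1) j : ℝ) * x ^ k + (gchoose (m + 1) (j + 1) : ℝ) := rfl

lemma det_T_succ (k n : ℕ) (x : ℝ) (r : ℤ) :
    (Tm k x (r + 1) (n + 1)).det
      = (Tm k x r (n + 1)).det + (Tm k x (r + 1) n).det := by
  set U : Matrix (Fin (n + 1)) (Fin (n + 1)) ℝ :=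
    Matrix.of (fun a b : Fin (n + 1) => ((gchoose 1 ((b : ℤ) - (a : ℤ)) : ℤ) : ℝ)) with hU
  set e0 : Fin (n + 1) → ℝ := fun i => if i = 0 then (1 : ℝ) else 0 with he0
  have hprod : Tm k x r (n + 1) * U
      = Matrix.updateCol (Tm k x (r + 1) (n + 1)) 0
          (fun i => Tm k x (r + 1) (n + 1) i 0 - e0 i) := by
    ext i j
    rw [hU, prod_entry k n x r 1]
    by_cases hj : j = 0
    · subst hj
      rw [Matrix.updateCol_self]
      by_cases hi : (i : ℕ) = 0
      · rw [if_pos hi]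
        have hi0 : i = 0 := Fin.ext hi
        subst hi0
        rw [he0]
        simp only [Tm, Matrix.of_apply, Ee_apply, if_pos rfl]
        norm_num
        rw [show (r - k + 1 + 1 : ℤ) = r + 1 - k + 1 from by ring, gchoose_one_one]
        push_cast
        ring
      · rw [if_neg hi]
        have hine : i ≠ 0 := fun h => hi (by simp [h])
        rw [he0]
        simp only [Tm, Matrix.of_apply, Ee_apply, if_neg hine]
        rw [show (r - k + 1 + 1 : ℤ) = r + 1 - k + 1 from by ring]
        push_cast
        ring
    · rw [Matrix.updateCol_ne hj]
      have hjv : 1 ≤ (j : ℕ) := by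
        rcases Nat.eq_zero_or_pos (j : ℕ) with h0 | h0
        · exact absurd (Fin.ext h0) hj
        · exact h0
      by_cases hi : (i : ℕ) = 0
      · rw [if_pos hi]
        have hi' : (i : ℤ) = 0 := by exact_mod_cast hi
        rw [gchoose_one_big (show 1 < (j : ℤ) + 1 by omega)]
        simp only [Tm, Matrix.of_apply, Ee_apply, hi']
        rw [show (r - k + 1 + 1 : ℤ) = r + 1 - k + 1 from by ring]
        push_cast
        ring
      · rw [if_neg hi]
        simp only [Tm, Matrix.of_apply, Ee_apply]
        rw [show (r - k + 1 + 1 : ℤ) = r + 1 - k + 1 from by ring]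
        push_cast
        ring
  have hdetprod : (Tm k x r (n + 1)).det
      = (Matrix.updateCol (Tm k x (r + 1) (n + 1)) 0
          (fun i => Tm k x (r + 1) (n + 1) i 0 - e0 i)).det := by
    rw [← hprod, Matrix.det_mul, hU, detW, mul_one]
  have hsub : (Matrix.updateCol (Tm k x (r + 1) (n + 1)) 0
          (fun i => Tm k x (r + 1) (n + 1) i 0 - e0 i)).det
      = (Tm k x (r + 1) (n + 1)).det
        - (Matrix.updateCol (Tm k x (r + 1) (n + 1)) 0 e0).det := by
    have h1 : (fun i => Tm k x (r + 1) (n + 1) i 0 - e0 i)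
        = (fun i => Tm k x (r + 1) (n + 1) i 0) + ((-1 : ℝ) • e0) := by
      funext i; simp; ring
    rw [h1, Matrix.det_updateCol_add, Matrix.updateCol_eq_self,
      Matrix.det_updateCol_smul]
    ring
  have hminor : (Matrix.updateCol (Tm k x (r + 1) (n + 1)) 0 e0).det
      = (Tm k x (r + 1) n).det := by
    rw [Matrix.det_succ_column_zero]
    rw [Finset.sum_eq_single 0]
    · have hm : (Matrix.updateCol (Tm k x (r + 1) (n + 1)) 0 e0).submatrix
          ((0 : Fin (n + 1)).succAbove) Fin.succ = Tm k x (r + 1) n := by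
        ext i j
        simp only [Matrix.submatrix_apply]
        rw [show ((0 : Fin (n + 1)).succAbove i) = i.succ from rfl,
          Matrix.updateCol_ne (Fin.succ_ne_zero j)]
        simp only [Tm, Matrix.of_apply, Fin.val_succ]
        congr 1
        push_cast
        ring
      rw [hm, Matrix.updateCol_self, he0]
      norm_num
    · intro i _ hine
      rw [Matrix.updateCol_self, he0]
      simp only [if_neg hine]
      ring
    · intro h
      exact absurd (Finset.mem_univ _) h
  rw [hdetprod, hsub, hminor]
  ring

lemma det_T_neg_one (k n : ℕ) (x : ℝ) :
    (Tm k x (-1) (n + 1)).det = x ^ k * (Tm k x ((k : ℤ) - 1) n).det := by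
  set W : Matrix (Fin (n + 1)) (Fin (n + 1)) ℝ :=
    Matrix.of (fun a b : Fin (n + 1) => ((gchoose (k : ℤ) ((b : ℤ) - (a : ℤ)) : ℤ) : ℝ)) with hW
  set e0 : Fin (n + 1) → ℝ := fun j => if j = 0 then (1 : ℝ) else 0 with he0
  have hprod : Tm k x (-1) (n + 1) * W
      = Matrix.updateRow (Tm k x ((k : ℤ) - 1) (n + 1)) 0 (x ^ k • e0) := by
    ext i j
    rw [hW, prod_entry k n x (-1) (k : ℤ)]
    by_cases hi : (i : ℕ) = 0
    · rw [if_pos hi]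
      have hi0 : i = 0 := Fin.ext hi
      subst hi0
      rw [Matrix.updateRow_self]
      rw [show ((-1 : ℤ) - k + 1 + k) = 0 from by ring, show ((-1 : ℤ) + 1 + k) = (k : ℤ) from by ring]
      rw [gchoose_zero_left]
      simp only [Pi.smul_apply, he0, smul_eq_mul, Fin.val_zero, Nat.cast_zero, sub_zero]
      by_cases hj : j = 0
      · subst hj
        rw [if_pos rfl, if_pos (by norm_num)]
        norm_num
      · rw [if_neg hj, if_neg (by
          intro h
          exact hj (by exact_mod_cast h))]
        norm_num
    · have hine : i ≠ 0 := fun h => hi (by simp [h])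
      rw [if_neg hi, Matrix.updateRow_ne hine]
      simp only [Tm, Matrix.of_apply, Ee_apply]
      rw [show ((-1 : ℤ) - k + 1 + k) = 0 from by ring,
        show ((-1 : ℤ) + 1 + k) = (k : ℤ) from by ring,
        show ((k : ℤ) - 1 - k + 1) = 0 from by ring,
        show ((k : ℤ) - 1 + 1) = (k : ℤ) from by ring]
      ring
  have hdetprod : (Tm k x (-1) (n + 1)).det
      = (Matrix.updateRow (Tm k x ((k : ℤ) - 1) (n + 1)) 0 (x ^ k • e0)).det := by
    rw [← hprod, Matrix.det_mul, hW, detW, mul_one]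
  rw [hdetprod, Matrix.det_updateRow_smul]
  congr 1
  rw [Matrix.det_succ_row_zero, Finset.sum_eq_single 0]
  · have hm : (Matrix.updateRow (Tm k x ((k : ℤ) - 1) (n + 1)) 0 e0).submatrix
        Fin.succ ((0 : Fin (n + 1)).succAbove) = Tm k x ((k : ℤ) - 1) n := by
      ext i j
      simp only [Matrix.submatrix_apply]
      rw [show ((0 : Fin (n + 1)).succAbove j) = j.succ from rfl,
        Matrix.updateRow_ne (Fin.succ_ne_zero i)]
      simp only [Tm, Matrix.of_apply, Fin.val_succ]
      congr 1
      push_cast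
      ring
    rw [hm, Matrix.updateRow_self, he0]
    norm_num
  · intro j _ hjne
    rw [Matrix.updateRow_self, he0]
    simp only [if_neg hjne]
    ring
  · intro h
    exact absurd (Finset.mem_univ _) h


lemma genFib_eq_sum (k m : ℕ) (hk : 1 ≤ k) (x : ℝ) (N : ℕ) (hN : m / k + 1 ≤ N) :
    genFib k m x = ∑ j ∈ Finset.range N,
      (Nat.choose (m - (k - 1) * j) j : ℝ) * x ^ (m - k * j) := by
  refine Finset.sum_subset (Finset.range_subset_range.mpr hN) fun j _ hj => ?_
  have hj' : m / k + 1 ≤ j := by simpa using hj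
  have hmj : m < k * j := by
    have h := (Nat.div_lt_iff_lt_mul hk).mp (show m / k < j by omega)
    have : j * k = k * j := Nat.mul_comm j k
    omega
  have h1 : (k - 1) * j = k * j - j := Nat.sub_one_mul k j
  have h2 : j ≤ k * j := Nat.le_mul_of_pos_left j hk
  have h0 : 0 ≤ m / k := Nat.zero_le _
  have hj1 : 1 ≤ j := by omega
  rw [Nat.choose_eq_zero_of_lt (show m - (k - 1) * j < j by omega)]
  norm_num

lemma genFib_base (k r : ℕ) (hr : r < k) (x : ℝ) : genFib k r x = x ^ r := by
  rw [genFib, Nat.div_eq_of_lt hr]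
  simp

lemma genFib_rec (k m : ℕ) (hk : 1 ≤ k) (hm : k ≤ m) (x : ℝ) :
    genFib k m x = x * genFib k (m - 1) x + genFib k (m - k) x := by
  rw [genFib_eq_sum k m hk x (m + 2) (by have := Nat.div_le_self m k; omega),
    genFib_eq_sum k (m - 1) hk x (m + 2) (by have := Nat.div_le_self (m - 1) k; omega),
    genFib_eq_sum k (m - k) hk x (m + 1) (by have := Nat.div_le_self (m - k) k; omega),
    Finset.sum_range_succ' (fun j => (Nat.choose (m - (k - 1) * j) j : ℝ) * x ^ (m - k * j)) (m + 1),
    Finset.sum_range_succ' (fun j => (Nat.choose (m - 1 - (k - 1) * j) j : ℝ) * x ^ (m - 1 - k * j)) (m + 1)]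
  have hterm : ∀ j, (Nat.choose (m - (k - 1) * (j + 1)) (j + 1) : ℝ) * x ^ (m - k * (j + 1))
      = x * ((Nat.choose (m - 1 - (k - 1) * (j + 1)) (j + 1) : ℝ) * x ^ (m - 1 - k * (j + 1)))
        + (Nat.choose (m - k - (k - 1) * j) j : ℝ) * x ^ (m - k - k * j) := by
    intro j
    have h1 : k * (j + 1) = k * j + k := by ring
    have h2 : (k - 1) * (j + 1) = k * (j + 1) - (j + 1) := Nat.sub_one_mul k (j + 1)
    have h3 : (k - 1) * j = k * j - j := Nat.sub_one_mul k j
    have h4 : j ≤ k * j := Nat.le_mul_of_pos_left j hk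
    have h5 : j + 1 ≤ k * (j + 1) := Nat.le_mul_of_pos_left (j + 1) hk
    rcases lt_trichotomy m (k * (j + 1)) with hc | hc | hc
    · by_cases hj0 : j = 0
      · subst hj0; omega
      · rw [Nat.choose_eq_zero_of_lt (show m - (k - 1) * (j + 1) < j + 1 by omega),
          Nat.choose_eq_zero_of_lt (show m - 1 - (k - 1) * (j + 1) < j + 1 by omega),
          Nat.choose_eq_zero_of_lt (show m - k - (k - 1) * j < j by omega)]
        norm_num
    · rw [show m - (k - 1) * (j + 1) = j + 1 by omega,
        show m - 1 - (k - 1) * (j + 1) = j by omega,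
        show m - k - (k - 1) * j = j by omega,
        show m - k * (j + 1) = 0 by omega,
        show m - k - k * j = 0 by omega,
        Nat.choose_self, Nat.choose_succ_self, Nat.choose_self]
      norm_num
    · set n0 := m - 1 - (k - 1) * (j + 1) with hn0
      rw [show m - (k - 1) * (j + 1) = n0 + 1 by omega,
        show m - k - (k - 1) * j = n0 by omega,
        show m - k * (j + 1) = (m - 1 - k * (j + 1)) + 1 by omega,
        show m - k - k * j = (m - 1 - k * (j + 1)) + 1 by omega,
        Nat.choose_succ_succ]
      push_cast
      rw [pow_succ]
      ring
  have hA : (∑ j ∈ Finset.range (m + 1),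
      (Nat.choose (m - (k - 1) * (j + 1)) (j + 1) : ℝ) * x ^ (m - k * (j + 1)))
      = ∑ j ∈ Finset.range (m + 1),
        (x * ((Nat.choose (m - 1 - (k - 1) * (j + 1)) (j + 1) : ℝ) * x ^ (m - 1 - k * (j + 1)))
          + (Nat.choose (m - k - (k - 1) * j) j : ℝ) * x ^ (m - k - k * j)) :=
    Finset.sum_congr rfl (fun j _ => hterm j)
  rw [hA]
  have hc0 : (Nat.choose (m - 1 - (k - 1) * 0) 0 : ℝ) * x ^ (m - 1 - k * 0) = x ^ (m - 1) := by
    simp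
  have ha0 : (Nat.choose (m - (k - 1) * 0) 0 : ℝ) * x ^ (m - k * 0) = x * x ^ (m - 1) := by
    simp only [Nat.mul_zero, Nat.sub_zero, Nat.choose_zero_right, Nat.cast_one, one_mul]
    calc x ^ m = x ^ (m - 1 + 1) := by rw [Nat.sub_add_cancel (show 1 ≤ m by omega)]
    _ = x * x ^ (m - 1) := by rw [pow_succ]; ring
  rw [hc0, ha0, Finset.sum_add_distrib, ← Finset.mul_sum]
  ring

lemma key (k : ℕ) (hk : 1 ≤ k) (x : ℝ) :
    ∀ n r : ℕ, r < k → x ^ r * (Tm k x (r : ℤ) n).det = genFib k (k * n + r) x := by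
  intro n
  induction n with
  | zero =>
    intro r hr
    rw [show Tm k x (r : ℤ) 0 = 1 from Subsingleton.elim _ _, Matrix.det_one,
      mul_one, Nat.mul_zero, Nat.zero_add, genFib_base k r hr]
  | succ n ih =>
    intro r
    induction r with
    | zero =>
      intro _
      have e1 : (Tm k x ((0 : ℕ) : ℤ) (n + 1)).det
          = (Tm k x (-1) (n + 1)).det + (Tm k x ((0 : ℕ) : ℤ) n).det := by
        rw [show ((0 : ℕ) : ℤ) = (-1) + 1 from by norm_num]
        exact det_T_succ k n x (-1)
      have e2 := det_T_neg_one k n x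
      have e3 := ih (k - 1) (by omega)
      have e4 := ih 0 (by omega)
      rw [Nat.add_zero] at e4
      have ecast : (((k - 1 : ℕ)) : ℤ) = (k : ℤ) - 1 := by push_cast [hk]; ring
      rw [ecast] at e3
      have exp : x ^ k = x * x ^ (k - 1) := by
        calc x ^ k = x ^ (k - 1 + 1) := by rw [Nat.sub_add_cancel hk]
        _ = x * x ^ (k - 1) := by rw [pow_succ]; ring
      have hrec := genFib_rec k (k * (n + 1)) hk (by nlinarith [Nat.le_mul_of_pos_right k (show 0 < n + 1 by omega)]) x
      rw [pow_zero, one_mul, e1, e2, exp]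
      have hm1 : k * (n + 1) - 1 = k * n + (k - 1) := by
        have : k * (n + 1) = k * n + k := by ring
        omega
      have hmk : k * (n + 1) - k = k * n := by
        have : k * (n + 1) = k * n + k := by ring
        omega
      rw [hm1, hmk] at hrec
      rw [show k * (n + 1) + 0 = k * (n + 1) by ring, hrec, ← e3, ← e4]
      rw [pow_zero] at e4 ⊢
      ring
    | succ r ihr =>
      intro hr
      have hrk : r < k := by omega
      have e1 : (Tm k x ((r + 1 : ℕ) : ℤ) (n + 1)).det
          = (Tm k x (r : ℤ) (n + 1)).det + (Tm k x ((r + 1 : ℕ) : ℤ) n).det := by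
        rw [show ((r + 1 : ℕ) : ℤ) = (r : ℤ) + 1 from by push_cast; ring]
        exact det_T_succ k n x (r : ℤ)
      have e2 := ihr hrk
      have e3 := ih (r + 1) hr
      have hkle : k ≤ k * (n + 1) := Nat.le_mul_of_pos_right k (by omega)
      have hrec := genFib_rec k (k * (n + 1) + (r + 1)) hk (by omega) x
      have hm1 : k * (n + 1) + (r + 1) - 1 = k * (n + 1) + r := by omega
      have hmk : k * (n + 1) + (r + 1) - k = k * n + (r + 1) := by
        have : k * (n + 1) = k * n + k := by ring
        omega
      rw [hm1, hmk] at hrec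
      rw [e1, hrec, ← e2, ← e3, pow_succ]
      ring

theorem det_eq_genFib_A (k r n : ℕ) (hr : r < k) (hn : 1 ≤ n) (x : ℝ) :
    x ^ r * Matrix.det (Matrix.of fun i j : Fin n =>
        (gchoose ((i : ℤ) - (k : ℤ) + 1 + (r : ℤ)) (j : ℤ) : ℝ) * x ^ k +
        (gchoose ((i : ℤ) + 1 + (r : ℤ)) ((j : ℤ) + 1) : ℝ)) = genFib k (k * n + r) x := by
  have hk : 1 ≤ k := by omega
  rw [detA_eq_detT k (r : ℤ) n x]
  exact key k hk x n r hr
end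
end

section
/- For 0 ≤ r < k and n ≥ 1, Σ_{j=0}^{n} (-1)^j C(r+1, j) F^{(k)}_{k(n-j)+r}(x) = x^{r+1} F^{(k)}_{kn-1}(x). -/
open Finset

lemma aux_choose : ∀ (a N s : ℕ), a ≤ N → s ≤ N →
    ∑ j ∈ range (s+1), (-1:ℝ)^j * (Nat.choose a j) * (Nat.choose (N-j) (s-j))
      = Nat.choose (N-a) s := by
  intro a
  induction a with
  | zero =>
    intro N s _ _
    rw [Finset.sum_range_succ']
    simp [Nat.choose_eq_zero_of_lt (Nat.succ_pos _)]
  | succ a ih =>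
    intro N s ha hs
    rcases Nat.eq_zero_or_pos s with hs0 | hs1
    · subst hs0; simp
    obtain ⟨u, rfl⟩ : ∃ u, s = u + 1 := ⟨s - 1, by omega⟩
    have hA := ih N (u+1) (by omega) hs
    have hB := ih (N-1) u (by omega) (by omega)
    rw [Finset.sum_range_succ'] at hA ⊢
    have expand : ∀ i ∈ range (u+1),
        (-1:ℝ)^(i+1) * (Nat.choose (a+1) (i+1)) * (Nat.choose (N-(i+1)) (u+1-(i+1)))
        = (-1:ℝ)^(i+1) * (Nat.choose a (i+1)) * (Nat.choose (N-(i+1)) (u+1-(i+1)))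
          + (-((-1:ℝ)^i * (Nat.choose a i) * (Nat.choose ((N-1)-i) (u-i)))) := by
      intro i hi
      have e1 : N - (i+1) = (N-1) - i := by omega
      have e2 : u + 1 - (i+1) = u - i := by omega
      rw [Nat.choose_succ_succ']
      rw [e1, e2]
      push_cast
      ring
    rw [Finset.sum_congr rfl expand, Finset.sum_add_distrib]
    have e3 : ∑ i ∈ range (u+1),
        (-((-1:ℝ)^i * (Nat.choose a i) * (Nat.choose ((N-1)-i) (u-i))))
        = -(Nat.choose ((N-1)-a) u : ℝ) := by
      rw [← hB, ← Finset.sum_neg_distrib]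
    rw [e3]
    have ht : N - a = (N - (a+1)) + 1 := by omega
    have ht2 : N - 1 - a = N - (a+1) := by omega
    rw [ht, Nat.choose_succ_succ'] at hA
    rw [ht2]
    simp only [Nat.add_sub_add_right, Nat.choose_zero_right, Nat.cast_one, pow_zero, one_mul,
      Nat.sub_zero] at hA ⊢
    push_cast at hA ⊢
    linarith [hA]


theorem alternating_sum_genFib (k r n : ℕ) (hr : r < k) (hn : 1 ≤ n) (x : ℝ) :
    ∑ j ∈ Finset.range (n + 1),
        (-1 : ℝ) ^ j * (Nat.choose (r + 1) j : ℝ) * genFib k (k * (n - j) + r) x =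
      x ^ (r + 1) * genFib k (k * n - 1) x := by
  have hk : 1 ≤ k := by omega
  unfold genFib
  have hdiv : ∀ m : ℕ, (k * m + r) / k = m := by
    intro m
    rw [Nat.mul_add_div hk, Nat.div_eq_of_lt hr, Nat.add_zero]
  have hdiv2 : (k * n - 1) / k = n - 1 := by
    have e0 : k * (n - 1) + k = k * n := by
      rw [← Nat.mul_succ]; congr 1; omega
    have e : k * n - 1 = k * (n - 1) + (k - 1) := by omega
    rw [e, Nat.mul_add_div hk, Nat.div_eq_of_lt (by omega), Nat.add_zero]
  -- LHS as triangular double sum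
  have lhs1 : ∑ j ∈ Finset.range (n + 1),
      (-1 : ℝ) ^ j * (Nat.choose (r + 1) j : ℝ) *
        ∑ i ∈ Finset.range ((k * (n - j) + r) / k + 1),
          (Nat.choose (k * (n - j) + r - (k - 1) * i) i : ℝ) * x ^ (k * (n - j) + r - k * i)
      = ∑ j ∈ Finset.range (n + 1), ∑ i ∈ Finset.range (n + 1 - j),
          (-1 : ℝ) ^ j * (Nat.choose (r + 1) j : ℝ) *
            ((Nat.choose (k * (n - j) + r - (k - 1) * i) i : ℝ) * x ^ (k * (n - j) + r - k * i)) := by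
    refine Finset.sum_congr rfl fun j hj => ?_
    have hjn : j ≤ n := by have := Finset.mem_range.mp hj; omega
    rw [hdiv (n - j), Finset.mul_sum]
    have : n - j + 1 = n + 1 - j := by
      have := Finset.mem_range.mp hj; omega
    rw [this]
  rw [lhs1, ← Finset.sum_range_diag_flip (n + 1) (fun j i =>
      (-1 : ℝ) ^ j * (Nat.choose (r + 1) j : ℝ) *
        ((Nat.choose (k * (n - j) + r - (k - 1) * i) i : ℝ) * x ^ (k * (n - j) + r - k * i)))]
  -- RHS
  rw [hdiv2, Finset.mul_sum]
  have hn1 : n - 1 + 1 = n := by omega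
  rw [hn1]
  have rhs1 : ∀ s ∈ Finset.range n,
      x ^ (r + 1) * ((Nat.choose (k * n - 1 - (k - 1) * s) s : ℝ) * x ^ (k * n - 1 - k * s))
      = (Nat.choose (k * n - 1 - (k - 1) * s) s : ℝ) * x ^ (k * (n - s) + r) := by
    intro s hs
    have hsn : s + 1 ≤ n := Finset.mem_range.mp hs
    have m1 : k * (n - s) + k * s = k * n := by rw [← Nat.mul_add]; congr 1; omega
    have hA1 : k * 1 ≤ k * (n - s) := Nat.mul_le_mul_left k (by omega)
    have eexp : r + 1 + (k * n - 1 - k * s) = k * (n - s) + r := by omega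
    rw [← eexp, pow_add]
    ring
  rw [Finset.sum_congr rfl rhs1]
  -- extend RHS sum to range (n+1)
  have extend : ∑ s ∈ Finset.range (n + 1),
      (Nat.choose (k * n - 1 - (k - 1) * s) s : ℝ) * x ^ (k * (n - s) + r)
      = ∑ s ∈ Finset.range n,
          (Nat.choose (k * n - 1 - (k - 1) * s) s : ℝ) * x ^ (k * (n - s) + r) := by
    rw [Finset.sum_range_succ]
    have m1 : (k - 1) * n + n = k * n := by
      conv_rhs => rw [show k = k - 1 + 1 from by omega]
      rw [Nat.succ_mul]
    have : k * n - 1 - (k - 1) * n = n - 1 := by omega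
    rw [this, Nat.choose_eq_zero_of_lt (by omega)]
    simp
  rw [← extend]
  -- compare term by term
  refine Finset.sum_congr rfl fun s hs => ?_
  have hsn : s ≤ n := by have := Finset.mem_range.mp hs; omega
  have m1 : k * (n - s) + k * s = k * n := by rw [← Nat.mul_add]; congr 1; omega
  have m2 : (k - 1) * s + s = k * s := by
    conv_rhs => rw [show k = k - 1 + 1 from by omega]
    rw [Nat.succ_mul]
  have hN1 : 1 ≤ k * (n - s) + s := by
    rcases Nat.eq_zero_or_pos s with h0 | h1
    · subst h0
      have : k * 1 ≤ k * (n - 0) := Nat.mul_le_mul_left k (by omega)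
      omega
    · omega
  have key := aux_choose (r + 1) (k * (n - s) + s + r) s (by omega) (by omega)
  have step : ∀ j ∈ Finset.range (s + 1),
      (-1 : ℝ) ^ j * (Nat.choose (r + 1) j : ℝ) *
        ((Nat.choose (k * (n - j) + r - (k - 1) * (s - j)) (s - j) : ℝ) *
          x ^ (k * (n - j) + r - k * (s - j)))
      = (-1 : ℝ) ^ j * (Nat.choose (r + 1) j : ℝ) *
          (Nat.choose (k * (n - s) + s + r - j) (s - j) : ℝ) * x ^ (k * (n - s) + r) := by
    intro j hj
    have hjs : j ≤ s := by have := Finset.mem_range.mp hj; omega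
    have a1 : k * (n - j) = k * (n - s) + k * (s - j) := by rw [← Nat.mul_add]; congr 1; omega
    have a2 : (k - 1) * (s - j) + (s - j) = k * (s - j) := by
      conv_rhs => rw [show k = k - 1 + 1 from by omega]
      rw [Nat.succ_mul]
    have e1 : k * (n - j) + r - (k - 1) * (s - j) = k * (n - s) + s + r - j := by omega
    have e2 : k * (n - j) + r - k * (s - j) = k * (n - s) + r := by omega
    rw [e1, e2]; ring
  rw [Finset.sum_congr rfl step, ← Finset.sum_mul, key]
  have efin : k * (n - s) + s + r - (r + 1) = k * n - 1 - (k - 1) * s := by omega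
  rw [efin]
end

section
/- For 0 ≤ r < k, n ≥ 1, and 0 < i < k+n, Σ_{j=0}^{n-1} (-1)^{n-1-j} C(i-k+r, n-1-j) x^k F^{(k)}_{kj+r}(x) = x^{r+i} F^{(k)}_{kn-i}(x). -/
open Finset

private lemma vand_step (N : ℕ) (a B : ℤ) :
    ∑ s ∈ range (N+2), (-1:ℤ)^s * Ring.choose (a+1) s * Ring.choose (B - s) (N+1 - s)
      = ∑ s ∈ range (N+2), (-1:ℤ)^s * Ring.choose a s * Ring.choose (B - s) (N+1 - s)
        - ∑ s ∈ range (N+1), (-1:ℤ)^s * Ring.choose a s * Ring.choose (B - 1 - s) (N - s) := by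
  rw [sum_range_succ' (fun s => (-1:ℤ)^s * Ring.choose (a+1) s * Ring.choose (B - s) (N+1 - s)) (N+1),
      sum_range_succ' (fun s => (-1:ℤ)^s * Ring.choose a s * Ring.choose (B - s) (N+1 - s)) (N+1)]
  have key : ∀ s ∈ range (N+1),
      (-1:ℤ)^(s+1) * Ring.choose (a+1) (s+1) * Ring.choose (B - ((s+1:ℕ):ℤ)) (N+1-(s+1))
      = ((-1:ℤ)^(s+1) * Ring.choose a (s+1) * Ring.choose (B - ((s+1:ℕ):ℤ)) (N+1-(s+1))
          - (-1:ℤ)^s * Ring.choose a s * Ring.choose (B - 1 - s) (N - s)) := by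
    intro s _
    rw [Ring.choose_succ_succ a s]
    have e1 : B - ((s+1:ℕ):ℤ) = B - 1 - s := by push_cast; ring
    have e2 : N + 1 - (s+1) = N - s := by omega
    rw [e1, e2]
    ring
  rw [sum_congr rfl key, sum_sub_distrib]
  simp [Ring.choose_zero_right]
  ring

private lemma vand (N : ℕ) (a B : ℤ) :
    ∑ s ∈ range (N+1), (-1:ℤ)^s * Ring.choose a s * Ring.choose (B - s) (N - s)
      = Ring.choose (B - a) N := by
  induction N generalizing a B with
  | zero => simp [Ring.choose_zero_right]
  | succ N ih =>
    induction a using Int.induction_on with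
    | zero =>
      rw [sum_range_succ' (fun s => (-1:ℤ)^s * Ring.choose 0 s * Ring.choose (B - s) (N+1 - s)) (N+1)]
      simp [Ring.choose_zero_succ, Ring.choose_zero_right]
    | succ m ihm =>
      have hstep := vand_step N m B
      have e : ((N:ℕ)+1+1) = N+2 := rfl
      rw [show (m:ℤ)+1 = ((m+1:ℤ)) from rfl] at hstep
      rw [hstep, ihm, ih]
      have h := Ring.choose_succ_succ (B - (m+1) : ℤ) N
      have e1 : B - ((m:ℤ)+1) + 1 = B - m := by ring
      rw [e1] at h
      have e2 : B - 1 - (m:ℤ) = B - ((m:ℤ)+1) := by ring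
      rw [e2]
      linarith [h]
    | pred m ihm =>
      have hstep := vand_step N (-(m:ℤ)-1) B
      have e0 : (-(m:ℤ)-1) + 1 = -(m:ℤ) := by ring
      rw [e0] at hstep
      have h2 := ih (-(m:ℤ)-1) (B-1)
      have hp := Ring.choose_succ_succ (B + (m:ℤ)) N
      have e1 : B - -(m:ℤ) = B + m := by ring
      have e2 : B - 1 - (-(m:ℤ)-1) = B + m := by ring
      have e3 : B - (-(m:ℤ)-1) = B + m + 1 := by ring
      rw [e1] at ihm
      rw [e2] at h2
      rw [e3]
      rw [ihm] at hstep
      linarith [hstep, h2, hp]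


theorem alternating_sum_genFib_shift (k r n i : ℕ) (hr : r < k) (hn : 1 ≤ n)
    (hi : 0 < i) (hik : i < k + n) (x : ℝ) :
    ∑ j ∈ Finset.range n,
        (-1 : ℝ) ^ (n - 1 - j) * (gchoose ((i : ℤ) - (k : ℤ) + (r : ℤ)) ((n : ℤ) - 1 - (j : ℤ)) : ℝ) *
          x ^ k * genFib k (k * j + r) x =
      x ^ (r + i) * genFib k (k * n - i) x := by
  have hk : 1 ≤ k := by omega
  set a : ℤ := (i:ℤ) - (k:ℤ) + (r:ℤ) with ha
  -- nonlinear facts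
  have hkn1 : k*(n-1) + k = k*n := by zify [hn]; ring
  have hkn2 : (k-1)*(n-1) + (k+n) = k*n + 1 := by zify [hn, hk]; ring
  have hikn : i ≤ k*n := by omega
  -- Step 1: left side as double sum
  have hdiv : ∀ j : ℕ, (k*j + r)/k = j := fun j => by
    rw [Nat.mul_add_div (by omega), Nat.div_eq_of_lt hr, Nat.add_zero]
  have hL : ∑ j ∈ Finset.range n,
        (-1 : ℝ) ^ (n - 1 - j) * (gchoose a ((n : ℤ) - 1 - (j : ℤ)) : ℝ) *
          x ^ k * genFib k (k * j + r) x
      = ∑ j ∈ Finset.range n, ∑ t ∈ Finset.range (j+1),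
          (-1 : ℝ) ^ (n - 1 - j) * ((Ring.choose a (n-1-j) : ℤ) : ℝ) * x ^ k *
            ((Nat.choose (k*j + r - (k-1)*t) t : ℝ) * x ^ (k*j + r - k*t)) := by
    refine Finset.sum_congr rfl fun j hj => ?_
    simp only [Finset.mem_range] at hj
    have hg : gchoose a ((n : ℤ) - 1 - (j : ℤ)) = Ring.choose a (n-1-j) := by
      rw [gchoose, if_pos (by omega)]
      congr 1
      omega
    rw [hg, genFib, hdiv j, Finset.mul_sum]
  rw [hL]
  -- Step 2: right side as double sum
  have hR : x ^ (r + i) * genFib k (k*n - i) x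
      = ∑ t ∈ Finset.range n,
          ((Ring.choose (((k*n : ℕ) : ℤ) - (i:ℤ) - (((k-1)*t : ℕ) : ℤ)) t : ℤ) : ℝ) *
            x ^ (r + k*(n-t)) := by
    rw [genFib, Finset.mul_sum]
    set M := k*n - i with hM
    have hq1 : M/k + 1 ≤ n := by
      have h1 : M < n * k := by
        have : n * k = k * n := Nat.mul_comm n k
        omega
      have := (Nat.div_lt_iff_lt_mul (show 0 < k by omega)).2 h1
      omega
    rw [← Finset.sum_subset (Finset.range_subset_range.mpr hq1) ?_]
    · refine Finset.sum_congr rfl fun t ht => ?_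
      simp only [Finset.mem_range] at ht
      have hkq : k * (M/k) ≤ M := Nat.mul_div_le M k
      have hkt : k*t ≤ M := le_trans (Nat.mul_le_mul_left k (by omega)) hkq
      have h2 : (k-1)*t + t = k*t := by zify [hk]; ring
      have harg : ((k*n : ℕ) : ℤ) - (i:ℤ) - (((k-1)*t : ℕ) : ℤ) = ((M - (k-1)*t : ℕ) : ℤ) := by
        omega
      rw [harg, Ring.choose_natCast]
      have hexp : k*(n-t) = k*n - k*t := by
        have h3 : k*(n-t) + k*t = k*n := by
          rw [← Nat.mul_add]
          congr 1
          omega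
        omega
      have h4 : r + i + (M - k*t) = r + k*(n-t) := by omega
      rw [← h4, pow_add, pow_add]
      push_cast
      ring
    · intro t ht ht'
      simp only [Finset.mem_range] at ht ht'
      have h1 : M < k*t := by
        have h0 : M < t * k := (Nat.div_lt_iff_lt_mul (show 0 < k by omega)).1 (by omega)
        have : t * k = k * t := Nat.mul_comm t k
        omega
      have h2 : (k-1)*t + t = k*t := by zify [hk]; ring
      have h3 : (k-1)*t ≤ M := by
        have h4 : (k-1)*t ≤ (k-1)*(n-1) := Nat.mul_le_mul_left _ (by omega)
        omega
      have harg : ((k*n : ℕ) : ℤ) - (i:ℤ) - (((k-1)*t : ℕ) : ℤ) = ((M - (k-1)*t : ℕ) : ℤ) := by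
        omega
      rw [harg, Ring.choose_natCast, Nat.choose_eq_zero_of_lt (by omega)]
      simp
  rw [hR]
  -- Step 3: right side, expand each coefficient by Vandermonde
  have hR2 : ∑ t ∈ Finset.range n,
        ((Ring.choose (((k*n : ℕ) : ℤ) - (i:ℤ) - (((k-1)*t : ℕ) : ℤ)) t : ℤ) : ℝ) *
          x ^ (r + k*(n-t))
      = ∑ t ∈ Finset.range n, ∑ s ∈ Finset.range (t+1),
          (((-1:ℤ)^s * Ring.choose a s *
              Ring.choose ((((k*(n-1)+r : ℕ) : ℤ)) - (((k-1)*t : ℕ) : ℤ) - (s:ℤ)) (t-s) : ℤ) : ℝ) *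
            x ^ (r + k*(n-t)) := by
    refine Finset.sum_congr rfl fun t ht => ?_
    have hB : (((k*(n-1)+r : ℕ) : ℤ)) - (((k-1)*t : ℕ) : ℤ) - a
        = ((k*n : ℕ) : ℤ) - (i:ℤ) - (((k-1)*t : ℕ) : ℤ) := by
      rw [ha]; omega
    rw [← hB, ← vand t a _, Int.cast_sum, Finset.sum_mul]
  rw [hR2]
  -- Step 4: bijection between the two double sums
  rw [Finset.sum_sigma', Finset.sum_sigma']
  refine Finset.sum_bij' (fun p _ => ⟨n-1-p.1+p.2, n-1-p.1⟩) (fun p _ => ⟨n-1-p.2, p.1-p.2⟩)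
    ?_ ?_ ?_ ?_ ?_
  · intro p hp
    simp only [Finset.mem_sigma, Finset.mem_range] at hp ⊢
    omega
  · intro p hp
    simp only [Finset.mem_sigma, Finset.mem_range] at hp ⊢
    omega
  · intro p hp
    obtain ⟨j, t⟩ := p
    simp only [Finset.mem_sigma, Finset.mem_range] at hp
    dsimp only
    exact Sigma.ext (show n - 1 - (n - 1 - j) = j by omega)
      (heq_of_eq (show n - 1 - j + t - (n - 1 - j) = t by omega))
  · intro p hp
    obtain ⟨j, t⟩ := p
    simp only [Finset.mem_sigma, Finset.mem_range] at hp
    dsimp only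
    exact Sigma.ext (show n - 1 - (n - 1 - t) + (j - t) = j by omega)
      (heq_of_eq (show n - 1 - (n - 1 - t) = t by omega))
  · intro p hp
    obtain ⟨j, t⟩ := p
    simp only [Finset.mem_sigma, Finset.mem_range] at hp
    obtain ⟨hj, ht⟩ := hp
    have ht' : t ≤ j := by omega
    -- nonlinear helpers
    have f1 : (k-1)*(n-1-j+t) + (k-1)*j = (k-1)*(n-1) + (k-1)*t := by
      rw [← Nat.mul_add, ← Nat.mul_add]
      congr 1
      omega
    have f2 : (k-1)*j + j = k*j := by zify [hk]; ring
    have f3 : (k-1)*(n-1) + (n-1) = k*(n-1) := by zify [hk, hn]; ring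
    have f4 : (k-1)*t ≤ (k-1)*j := Nat.mul_le_mul_left _ ht'
    have g4 : k*t ≤ k*j := Nat.mul_le_mul_left _ ht'
    have e1 : n-1-j+t-(n-1-j) = t := by omega
    have harg : (((k*(n-1)+r : ℕ) : ℤ)) - (((k-1)*(n-1-j+t) : ℕ) : ℤ) - ((n-1-j : ℕ) : ℤ)
        = ((k*j + r - (k-1)*t : ℕ) : ℤ) := by omega
    have hexp : r + k*(n-(n-1-j+t)) = k + (k*j + r - k*t) := by
      have g1 : n-(n-1-j+t) = j+1-t := by omega
      have g2 : k*(j+1-t) + k*t = k*(j+1) := by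
        rw [← Nat.mul_add]
        congr 1
        omega
      have g3 : k*(j+1) = k*j + k := by ring
      rw [g1]
      omega
    simp only []
    rw [harg, Ring.choose_natCast, e1, hexp, pow_add]
    push_cast
    ring
end

section
/- For n ≥ 1, Σ_{j=0}^{⌊n/k⌋} (-1)^j C(n,j) L^{(k)}_{n-kj}(x) = x^n, where L^{(k)}_0 is taken to be 1 instead of k in the j-term with n-kj = 0 (i.e., with l^{(k)}_0 = 1). -/
open Finset

/-- Generalized Lucas polynomials `L^{(k)}_m(x)` for `m > 0`, with `L^{(k)}_0(x) = k`. -/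
noncomputable def genLucas (k m : ℕ) (x : ℝ) : ℝ :=
  if m = 0 then (k : ℝ)
  else ∑ j ∈ Finset.range (m / k + 1),
    ((m : ℝ) / ((m - (k - 1) * j : ℕ) : ℝ)) *
      (Nat.choose (m - (k - 1) * j) j : ℝ) * x ^ (m - k * j)

/-- The modified generalized Lucas polynomials `l^{(k)}_m(x)`, equal to `L^{(k)}_m(x)`
for `m > 0` and with `l^{(k)}_0(x) = 1` instead of `k`. -/
noncomputable def genLucasMod (k m : ℕ) (x : ℝ) : ℝ :=
  if m = 0 then 1 else genLucas k m x

/-- Triangular reindexing of a double sum. -/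
lemma tri (N : ℕ) (f : ℕ → ℕ → ℝ) :
    ∑ j ∈ range (N+1), ∑ i ∈ range (N - j + 1), f j i
      = ∑ t ∈ range (N+1), ∑ j ∈ range (t+1), f j (t - j) := by
  induction N with
  | zero => simp
  | succ N ih =>
    rw [sum_range_succ (f := fun t => ∑ j ∈ range (t+1), f j (t-j)), ← ih]
    rw [sum_range_succ (f := fun j => ∑ i ∈ range (N + 1 - j + 1), f j i)]
    have h1 : ∀ j ∈ range (N+1), ∑ i ∈ range (N+1-j+1), f j i
        = (∑ i ∈ range (N-j+1), f j i) + f j (N+1-j) := by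
      intro j hj
      simp only [mem_range] at hj
      have e1 : N+1-j+1 = (N-j+1)+1 := by omega
      have e2 : N-j+1 = N+1-j := by omega
      rw [e1, sum_range_succ, e2]
    rw [sum_congr rfl h1, sum_add_distrib]
    have : ∑ j ∈ range (N+1+1), f j (N+1-j)
        = (∑ j ∈ range (N+1), f j (N+1-j)) + f (N+1) 0 := by
      rw [sum_range_succ]; simp
    rw [this]
    simp only [Nat.sub_self, zero_add, sum_range_one]
    ring

/-- Alternating convolution of binomial coefficients. -/
lemma lemA : ∀ n t d : ℕ, d + t ≤ n →
    ∑ j ∈ range (t+1), (-1:ℤ)^j * (n.choose j) * ((n - d - j).choose (t - j))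
      = (-1)^t * ((d + t - 1).choose t) := by
  intro n
  induction n with
  | zero =>
    intro t d h
    have ht : t = 0 := by omega
    have hd : d = 0 := by omega
    subst ht; subst hd; simp
  | succ n ih =>
    intro t d h
    rcases Nat.eq_zero_or_pos t with ht | ht
    · subst ht; simp
    rcases Nat.eq_zero_or_pos d with hd | hd
    · subst hd
      have hL : ∀ j ∈ range (t+1),
          (-1:ℤ)^j * ((n+1).choose j) * ((n+1 - 0 - j).choose (t - j))
            = ((n+1).choose t : ℤ) * ((-1)^j * (t.choose j)) := by
        intro j hj
        simp only [mem_range] at hj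
        have hjt : j ≤ t := by omega
        have htn : t ≤ n + 1 := by omega
        have := Nat.choose_mul (n := n+1) hjt
        have e : n + 1 - 0 - j = n + 1 - j := by omega
        rw [e]
        have hz : (((n+1).choose j : ℤ)) * (((n+1) - j).choose (t-j) : ℤ)
            = (((n+1).choose t : ℤ)) * ((t.choose j : ℤ)) := by exact_mod_cast this.symm
        linear_combination ((-1:ℤ)^j) * hz
      rw [sum_congr rfl hL, ← mul_sum, Int.alternating_sum_range_choose_of_ne (by omega : t ≠ 0)]
      have : (0 + t - 1).choose t = 0 := Nat.choose_eq_zero_of_lt (by omega)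
      rw [this]
      ring
    · obtain ⟨s, rfl⟩ : ∃ s, t = s + 1 := ⟨t-1, by omega⟩
      obtain ⟨e, rfl⟩ : ∃ e, d = e + 1 := ⟨d-1, by omega⟩
      have h1 := ih (s+1) e (by omega)
      have h2 := ih s (e+1) (by omega)
      have key : ∑ j ∈ range (s+1+1), (-1:ℤ)^j * ((n+1).choose j) * ((n+1 - (e+1) - j).choose (s+1 - j))
          = (∑ j ∈ range (s+1+1), (-1:ℤ)^j * (n.choose j) * ((n - e - j).choose (s+1 - j)))
            - (∑ j ∈ range (s+1), (-1:ℤ)^j * (n.choose j) * ((n - (e+1) - j).choose (s - j))) := by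
        rw [sum_range_succ' (fun j => (-1:ℤ)^j * ((n+1).choose j) * ((n+1 - (e+1) - j).choose (s+1 - j))),
            sum_range_succ' (fun j => (-1:ℤ)^j * (n.choose j) * ((n - e - j).choose (s+1 - j)))]
        have head : ((n+1 - (e+1) - 0).choose (s+1-0) : ℤ) = ((n - e - 0).choose (s+1-0) : ℤ) := by
          congr 2
          omega
        have body : ∀ j ∈ range (s+1),
            (-1:ℤ)^(j+1) * ((n+1).choose (j+1)) * ((n+1 - (e+1) - (j+1)).choose (s+1 - (j+1)))
              = (-1:ℤ)^(j+1) * (n.choose (j+1)) * ((n - e - (j+1)).choose (s+1 - (j+1)))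
                - (-1:ℤ)^j * (n.choose j) * ((n - (e+1) - j).choose (s - j)) := by
          intro j hj
          have e1 : n + 1 - (e+1) - (j+1) = n - (e+1) - j := by omega
          have e2 : n - e - (j+1) = n - (e+1) - j := by omega
          have e3 : s + 1 - (j+1) = s - j := by omega
          rw [e1, e2, e3, Nat.choose_succ_succ n j]
          push_cast
          ring
        rw [sum_congr rfl body, sum_sub_distrib, head]
        simp only [Nat.choose_zero_right]
        ring
      rw [key, h1, h2]
      have e4 : e + (s+1) - 1 = e + s := by omega
      have e5 : e + 1 + s - 1 = e + s := by omega
      have e6 : e + 1 + (s+1) - 1 = (e+s) + 1 := by omega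
      rw [e4, e5, e6, Nat.choose_succ_succ (e+s) s]
      push_cast
      ring

lemma lemA_real (n t d : ℕ) (h : d + t ≤ n) :
    ∑ j ∈ range (t+1), (-1:ℝ)^j * (n.choose j : ℝ) * (((n - d - j).choose (t - j) : ℕ) : ℝ)
      = (-1)^t * (((d + t - 1).choose t : ℕ) : ℝ) := by
  have := lemA n t d h
  exact_mod_cast congrArg (fun z : ℤ => (z : ℝ)) this

lemma keynat (k t : ℕ) (hk : 1 ≤ k) (ht : 1 ≤ t) :
    (k*t-1).choose t = (k-1) * ((k*t-1).choose (t-1)) := by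
  obtain ⟨k', rfl⟩ : ∃ k', k = k'+1 := ⟨k-1, by omega⟩
  obtain ⟨t', rfl⟩ : ∃ t', t = t'+1 := ⟨t-1, by omega⟩
  have h := Nat.choose_succ_right_eq ((k'+1)*(t'+1)-1) t'
  have hM : (k'+1)*(t'+1) - 1 - t' = k'*(t'+1) := by
    have hexp : (k'+1)*(t'+1) = k'*(t'+1) + (t'+1) := by ring
    rw [hexp]
    generalize k'*(t'+1) = A
    omega
  rw [hM] at h
  have e2 : k' + 1 - 1 = k' := by omega
  have e3 : t' + 1 - 1 = t' := by omega
  rw [e2, e3]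
  apply Nat.eq_of_mul_eq_mul_right (Nat.succ_pos t')
  rw [Nat.succ_eq_add_one, h]
  ring

/-- The per-term coefficients in the rewritten form of `genLucasMod`. -/
noncomputable def gcoef (k m i : ℕ) : ℝ :=
  if i = 0 then 1
  else ((m - (k-1)*i).choose i : ℝ) + ((k-1 : ℕ) : ℝ) * (((m - (k-1)*i - 1).choose (i-1)) : ℝ)

lemma genLucasMod_eq (k : ℕ) (hk : 1 ≤ k) (m : ℕ) (x : ℝ) :
    genLucasMod k m x = ∑ i ∈ range (m/k + 1), gcoef k m i * x ^ (m - k*i) := by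
  rcases Nat.eq_zero_or_pos m with hm | hm
  · subst hm
    simp [genLucasMod, gcoef, Nat.zero_div]
  · rw [genLucasMod, genLucas, if_neg (by omega), if_neg (by omega)]
    apply sum_congr rfl
    intro i hi
    simp only [mem_range] at hi
    have hki : k * i ≤ m := by
      have h' : i * k ≤ m := (Nat.le_div_iff_mul_le (by omega)).1 (by omega)
      calc k * i = i * k := mul_comm k i
        _ ≤ m := h'
    rcases Nat.eq_zero_or_pos i with hi0 | hi0
    · subst hi0
      rw [show gcoef k m 0 = 1 from if_pos rfl]
      simp only [Nat.mul_zero, Nat.sub_zero, Nat.choose_zero_right, Nat.cast_one]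
      rw [div_self (by exact_mod_cast (by omega : m ≠ 0))]
      ring
    · have hk1i : (k-1)*i ≤ m := le_trans (Nat.mul_le_mul_right i (by omega)) hki
      set a := m - (k-1)*i with ha
      have hai : i ≤ a := by
        have : (k-1)*i + i = k*i := by
          cases' k with k; · omega
          simp [Nat.succ_sub_one, Nat.succ_mul]
        omega
      have ha1 : 1 ≤ a := le_trans hi0 hai
      have hid : a * ((a-1).choose (i-1)) = a.choose i * i := by
        have := Nat.add_one_mul_choose_eq (a-1) (i-1)
        have e1 : a - 1 + 1 = a := by omega
        have e2 : i - 1 + 1 = i := by omega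
        rwa [e1, e2] at this
      have hmn : m = a + (k-1)*i := by omega
      rw [gcoef, if_neg (by omega)]
      have haR : ((a:ℝ)) ≠ 0 := by exact_mod_cast (by omega : a ≠ 0)
      have hidR : ((a:ℝ)) * (((a-1).choose (i-1) : ℕ) : ℝ) = ((a.choose i : ℕ) : ℝ) * i := by
        exact_mod_cast congrArg (Nat.cast (R:=ℝ)) hid
      have hmR : ((m:ℝ)) = (a:ℝ) + ((k-1:ℕ):ℝ) * i := by
        exact_mod_cast congrArg (Nat.cast (R:=ℝ)) hmn
      rw [← ha]
      have hc : (m:ℝ)/(a:ℝ) * ((a.choose i : ℕ):ℝ)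
          = ((a.choose i : ℕ):ℝ) + (((k-1:ℕ)):ℝ) * ((((a-1).choose (i-1) : ℕ)):ℝ) := by
        rw [div_mul_eq_mul_div, div_eq_iff haR, hmR]
        linear_combination (-(((k-1:ℕ)):ℝ)) * hidR
      rw [← hc]

theorem alternating_sum_genLucasMod (k n : ℕ) (hk : 1 ≤ k) (hn : 1 ≤ n) (x : ℝ) :
    ∑ j ∈ Finset.range (n / k + 1),
        (-1 : ℝ) ^ j * (Nat.choose n j : ℝ) * genLucasMod k (n - k * j) x = x ^ n := by
  have hkpos : 0 < k := hk
  set N := n / k with hN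
  have step1 : ∀ j ∈ range (N+1),
      (-1:ℝ)^j * (n.choose j : ℝ) * genLucasMod k (n - k*j) x
        = ∑ i ∈ range (N - j + 1),
            (-1:ℝ)^j * (n.choose j : ℝ) * gcoef k (n-k*j) i * x ^ (n - k*j - k*i) := by
    intro j hj
    simp only [mem_range] at hj
    have hkj : k * j ≤ n := by
      have h' : j * k ≤ n := (Nat.le_div_iff_mul_le hkpos).1 (by omega)
      calc k * j = j * k := mul_comm k j
        _ ≤ n := h'
    have hdiv : (n - k*j)/k = N - j := by
      rw [hN]; exact Nat.sub_mul_div n k j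
    rw [genLucasMod_eq k hk (n-k*j) x, hdiv, mul_sum]
    apply sum_congr rfl
    intro i _
    ring
  rw [sum_congr rfl step1,
    tri N (fun j i => (-1:ℝ)^j * (n.choose j : ℝ) * gcoef k (n-k*j) i * x ^ (n - k*j - k*i))]
  rw [Finset.sum_eq_single_of_mem 0 (mem_range.2 (Nat.succ_pos N))]
  · simp [gcoef]
  · intro t htmem ht0
    simp only [mem_range] at htmem
    have ht1 : 1 ≤ t := by omega
    have htN : t ≤ N := by omega
    have hkt : k * t ≤ n := by
      have h' : t * k ≤ n := (Nat.le_div_iff_mul_le hkpos).1 (by omega)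
      calc k * t = t * k := mul_comm k t
        _ ≤ n := h'
    -- uniform exponent
    have hexp : ∀ j ∈ range (t+1),
        (-1:ℝ)^j * (n.choose j : ℝ) * gcoef k (n-k*j) (t-j) * x ^ (n - k*j - k*(t-j))
          = ((-1:ℝ)^j * (n.choose j : ℝ) * gcoef k (n-k*j) (t-j)) * x ^ (n - k*t) := by
      intro j hj
      simp only [mem_range] at hj
      have hAB : k*j + k*(t-j) = k*t := by
        rw [← Nat.mul_add]
        congr 1
        omega
      rw [Nat.sub_sub, hAB]
    rw [sum_congr rfl hexp, ← sum_mul]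
    -- show the coefficient sum is zero
    obtain ⟨D, hD⟩ : ∃ D, D = (k-1)*t := ⟨_, rfl⟩
    have hDt : D + t = k*t := by
      rw [hD]
      cases' k with k
      · omega
      · simp [Nat.succ_sub_one, Nat.succ_mul]
    have hDn : D + t ≤ n := le_trans (le_of_eq hDt) hkt
    have expand : ∀ j ∈ range t, gcoef k (n-k*j) (t-j)
        = (((n - D - j).choose (t-j) : ℕ) : ℝ)
          + ((k-1:ℕ):ℝ) * (((n - (D+1) - j).choose (t-1-j) : ℕ) : ℝ) := by
      intro j hj
      simp only [mem_range] at hj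
      have hkj : k * j ≤ k * t := Nat.mul_le_mul_left k (by omega)
      have h1 : (k-1)*(t-j) + (k-1)*j = (k-1)*t := by
        rw [← Nat.mul_add]
        congr 1
        omega
      have h2 : k*j = (k-1)*j + j := by
        cases' k with k
        · omega
        · simp [Nat.succ_sub_one, Nat.succ_mul]
      have emain : (n - k*j) - (k-1)*(t-j) = n - (D + j) := by
        rw [Nat.sub_sub]
        congr 1
        rw [hD]
        linarith [h1, h2]
      have e2 : (n - k*j) - (k-1)*(t-j) - 1 = n - (D+1) - j := by
        rw [emain]
        omega
      have e3 : n - (D + j) = n - D - j := by omega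
      have e4 : (t - j) - 1 = t - 1 - j := by omega
      rw [gcoef, if_neg (by omega), emain,
        show n - (D + j) - 1 = n - (D+1) - j from by omega, e3, e4]
    have hS1 := lemA_real n t D hDn
    have hS2 := lemA_real n (t-1) (D+1) (by omega)
    rw [show t - 1 + 1 = t from by omega] at hS2
    -- split off the j = t terms
    rw [sum_range_succ] at hS1 ⊢
    rw [show t - t = 0 from Nat.sub_self t] at hS1 ⊢
    rw [show gcoef k (n - k*t) 0 = 1 from if_pos rfl]
    rw [Nat.choose_zero_right] at hS1
    simp only [Nat.cast_one, mul_one] at hS1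
    have hsplit : ∑ j ∈ range t, (-1:ℝ)^j * (n.choose j : ℝ) * gcoef k (n-k*j) (t-j)
        = (∑ j ∈ range t, (-1:ℝ)^j * (n.choose j : ℝ) * (((n - D - j).choose (t-j) : ℕ) : ℝ))
          + ((k-1:ℕ):ℝ) * (∑ j ∈ range t,
              (-1:ℝ)^j * (n.choose j : ℝ) * (((n - (D+1) - j).choose (t-1-j) : ℕ) : ℝ)) := by
      rw [mul_sum, ← sum_add_distrib]
      apply sum_congr rfl
      intro j hj
      rw [expand j hj]
      ring
    rw [hsplit]
    -- rewrite the binomial tops to k*t-1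
    have eA : D + t - 1 = k*t - 1 := by omega
    have eB : D + 1 + (t-1) - 1 = k*t - 1 := by omega
    rw [eA] at hS1
    rw [eB] at hS2
    have hC : ((k*t-1).choose t : ℝ) = ((k-1:ℕ):ℝ) * (((k*t-1).choose (t-1) : ℕ) : ℝ) := by
      exact_mod_cast congrArg (Nat.cast (R:=ℝ)) (keynat k t hk ht1)
    have hpow : (-1:ℝ)^t = -(-1:ℝ)^(t-1) := by
      have ht' : t = (t-1)+1 := by omega
      nth_rewrite 1 [ht']
      rw [pow_succ]
      ring
    have hz : (∑ j ∈ range t, (-1:ℝ)^j * (n.choose j : ℝ) * (((n - D - j).choose (t-j) : ℕ) : ℝ))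
        = (-1)^t * (((k*t-1).choose t : ℕ) : ℝ) - (-1)^t * (n.choose t : ℝ) := by
      linarith [hS1]
    rw [hz, hS2, hC, hpow]
    ring
end
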